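/- Let ρ be a state on Q^⊗n and let {P, I−P} and {P′, I−P′} be binary POVMs with ‖P′ − P‖_∞ ≤ δ. Then for all e ∈ [0,1] and c ≥ 0: Pr(N_{P′}/n ≥ e + 2δ + c) ≤ Pr(N_P/n ≥ e) + ξ(n, 2δ, c), where ξ(n,δ,c) := Σ_{i=⌈n(δ+c)⌉}^n C(n,i) δ^i (1−δ)^{n−i}. -/

import Mathlib

/-!
Put `G = (1-δ)P` and `R = δI + (1-δ)(P' - P)`, so that `G + R = (1-δ)P' + δI`. Because
`-δI ≤ P' - P ≤ δI`, we get `0 ≤ G ≤ P`, `0 ≤ R ≤ 2δI` and `P' ≤ G + R ≤ I`. Two comparison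
principles for product measurements then give
`Pr(N_{P'} ≥ (e+2δ+c)n) ≤ Pr(N_{G+R} ≥ (e+2δ+c)n) ≤ Pr(N_G ≥ en) + Pr(N_R ≥ (2δ+c)n)
  ≤ Pr(N_P ≥ en) + Pr(N_{2δI} ≥ (2δ+c)n)`:
the tail is monotone in the Loewner order of the POVM element, and it is subadditive when two
disjoint outcomes are merged. Both follow by refining the binary measurements into one
three-outcome measurement and comparing outcome counts string by string. Finally, the scalar
POVM `{2δI, (1-2δ)I}` produces i.i.d. Bernoulli(2δ) outcomes, whose tail is `ξ(n, 2δ, c)`.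
-/

open Matrix BigOperators
open scoped ComplexOrder

/-- The product POVM element on `Q^⊗n` corresponding to outcome string `s`, where each
subsystem is measured with the binary POVM `{P, I − P}` (`s i = true` means `P`-outcome). -/
noncomputable def povmProd {d n : ℕ} (P : Matrix (Fin d) (Fin d) ℂ) (s : Fin n → Bool) :
    Matrix (Fin n → Fin d) (Fin n → Fin d) ℂ :=
  Matrix.of fun x y => ∏ i, (if s i then P else (1 : Matrix (Fin d) (Fin d) ℂ) - P) (x i) (y i)

/-- `Pr(N_P / n ≥ e)`: the probability (via Born's rule) that, measuring each of the `n`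
subsystems of `ρ` with `{P, I − P}`, the number of `P`-outcomes is at least `e·n`. -/
noncomputable def tailProb {d n : ℕ} (ρ : Matrix (Fin n → Fin d) (Fin n → Fin d) ℂ)
    (P : Matrix (Fin d) (Fin d) ℂ) (e : ℝ) : ℝ :=
  ∑ s : Fin n → Bool,
    if e * n ≤ ((Finset.univ.filter fun i => s i = true).card : ℝ)
    then ((povmProd P s * ρ).trace).re else 0

/-- The operator norm `‖·‖_∞` of a matrix, i.e. the norm of the induced linear operator
on Euclidean space. -/
noncomputable def matOpNorm {d : ℕ} (P : Matrix (Fin d) (Fin d) ℂ) : ℝ :=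
  ‖LinearMap.toContinuousLinearMap (Matrix.toEuclideanLin P)‖

/-- Upper tail `ξ(n, δ, c)` of the Binomial(n, δ) distribution, summed from `⌈n(δ+c)⌉` to `n`. -/
noncomputable def binTail (n : ℕ) (δ c : ℝ) : ℝ :=
  ∑ i ∈ (Finset.range (n + 1)).filter (fun i : ℕ => (n : ℝ) * (δ + c) ≤ (i : ℝ)),
    (n.choose i : ℝ) * δ ^ i * (1 - δ) ^ (n - i)

open Finset
open scoped MatrixOrder

namespace Matrix

variable {ι m R : Type*} [Fintype ι]

def piKronecker [CommSemiring R] (A : ι → Matrix m m R) : Matrix (ι → m) (ι → m) R :=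
  Matrix.of fun x y => ∏ i, A i (x i) (y i)

lemma piKronecker_sum [CommSemiring R] [DecidableEq ι] {α : Type*} (S : ι → Finset α)
    (E : ι → α → Matrix m m R) :
    piKronecker (fun i => ∑ a ∈ S i, E i a)
      = ∑ t ∈ Fintype.piFinset S, piKronecker fun i => E i (t i) := by
  ext x y
  simp only [piKronecker, of_apply, Matrix.sum_apply, Finset.prod_univ_sum]

lemma piKronecker_mul [CommSemiring R] [DecidableEq ι] [Fintype m] (A B : ι → Matrix m m R) :
    piKronecker (fun i => A i * B i) = piKronecker A * piKronecker B := by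
  ext x y
  simp only [piKronecker, of_apply, mul_apply, Finset.prod_univ_sum, Fintype.piFinset_univ,
    Finset.prod_mul_distrib]

lemma piKronecker_conjTranspose [CommSemiring R] [StarRing R] (A : ι → Matrix m m R) :
    piKronecker (fun i => (A i)ᴴ) = (piKronecker A)ᴴ := by
  ext x y
  simp [piKronecker, star_prod]

lemma piKronecker_smul [CommSemiring R] (c : ι → R) (A : ι → Matrix m m R) :
    piKronecker (fun i => c i • A i) = (∏ i, c i) • piKronecker A := by
  ext x y
  simp [piKronecker, Finset.prod_mul_distrib]

lemma piKronecker_one [CommSemiring R] [DecidableEq m] :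
    piKronecker (fun _ : ι => (1 : Matrix m m R)) = 1 := by
  ext x y
  simp [piKronecker, one_apply, Finset.prod_boole, funext_iff]

lemma PosSemidef.piKronecker {𝕜 : Type*} [RCLike 𝕜] [Fintype m] {A : ι → Matrix m m 𝕜}
    (hA : ∀ i, (A i).PosSemidef) : (piKronecker A).PosSemidef := by
  classical
  choose B hB using fun i => CStarAlgebra.nonneg_iff_eq_star_mul_self.mp (hA i).nonneg
  rw [show A = fun i => (B i)ᴴ * B i from funext hB, piKronecker_mul, piKronecker_conjTranspose]
  exact posSemidef_conjTranspose_mul_self _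

lemma PosSemidef.trace_mul_nonneg {𝕜 : Type*} [RCLike 𝕜] [Fintype m] {A B : Matrix m m 𝕜}
    (hA : A.PosSemidef) (hB : B.PosSemidef) : 0 ≤ (A * B).trace := by
  classical
  obtain ⟨C, rfl⟩ := CStarAlgebra.nonneg_iff_eq_star_mul_self.mp hA.nonneg
  rw [star_eq_conjTranspose, mul_assoc, trace_mul_comm]
  exact (hB.mul_mul_conjTranspose_same C).trace_nonneg

open scoped Matrix.Norms.L2Operator in
lemma IsHermitian.mem_Icc_of_norm_le [Fintype m] [DecidableEq m] {X : Matrix m m ℂ}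
    (hX : X.IsHermitian) {r : ℝ} (h : ‖X‖ ≤ r) : X ∈ Set.Icc (-(r • 1)) (r • 1) := by
  have hmono : algebraMap ℝ (Matrix m m ℂ) ‖X‖ ≤ r • 1 := by
    simpa [Algebra.algebraMap_eq_smul_one] using algebraMap_mono (Matrix m m ℂ) h
  exact ⟨(neg_le_neg hmono).trans hX.isSelfAdjoint.neg_algebraMap_norm_le_self,
    hX.isSelfAdjoint.le_algebraMap_norm_self.trans hmono⟩

end Matrix

lemma Fintype.sum_fun_bool_apply_card {ι M : Type*} [Fintype ι] [DecidableEq ι]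
    [AddCommMonoid M] (F : ℕ → M) :
    ∑ s : ι → Bool, F #{i | s i}
      = ∑ k ∈ range (Fintype.card ι + 1), (Fintype.card ι).choose k • F k := by
  rw [← card_univ, ← sum_powerset_apply_card, powerset_univ]
  refine sum_nbij' (fun s => ({i | s i} : Finset ι)) (fun t i => decide (i ∈ t))
    ?_ ?_ ?_ ?_ ?_ <;> simp

open scoped Matrix.Norms.L2Operator in
lemma matOpNorm_eq_norm {d : ℕ} (X : Matrix (Fin d) (Fin d) ℂ) : matOpNorm X = ‖X‖ :=
  rfl

lemma binTail_eq_zero_of_one_lt {n : ℕ} (hn : 0 < n) {η c : ℝ} (h : 1 < η + c) :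
    binTail n η c = 0 := by
  refine sum_eq_zero fun i hi => ?_
  obtain ⟨hrange, hcut⟩ := mem_filter.mp hi
  have hin : (i : ℝ) ≤ n := by exact_mod_cast Nat.lt_succ_iff.mp (mem_range.mp hrange)
  have hn' : (1 : ℝ) ≤ n := by exact_mod_cast hn
  nlinarith

section TailProb

variable {d n : ℕ} (ρ : Matrix (Fin n → Fin d) (Fin n → Fin d) ℂ)

lemma povmProd_eq_piKronecker (P : Matrix (Fin d) (Fin d) ℂ) (s : Fin n → Bool) :
    povmProd P s = piKronecker fun i => if s i then P else 1 - P :=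
  rfl

lemma re_trace_piKronecker_mul_nonneg (hρ : ρ.PosSemidef) {α : Type*}
    {E : α → Matrix (Fin d) (Fin d) ℂ} (hE0 : ∀ a, 0 ≤ E a) (t : Fin n → α) :
    0 ≤ ((piKronecker fun i => E (t i)) * ρ).trace.re :=
  (Complex.nonneg_iff.mp <| (PosSemidef.piKronecker fun i =>
    nonneg_iff_posSemidef.mp (hE0 (t i))).trace_mul_nonneg hρ).1

lemma tailProb_nonneg (hρ : ρ.PosSemidef) {P : Matrix (Fin d) (Fin d) ℂ} (hP : 0 ≤ P)
    (hP1 : P ≤ 1) (e : ℝ) : 0 ≤ tailProb ρ P e := by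
  have hE0 : ∀ b : Bool, 0 ≤ if b then P else 1 - P := by simp [hP, hP1]
  refine sum_nonneg fun s _ => ?_
  split_ifs
  · rw [povmProd_eq_piKronecker]
    exact re_trace_piKronecker_mul_nonneg ρ hρ hE0 s
  · rfl

lemma tailProb_eq_zero_of_one_lt (hn : 0 < n) (P : Matrix (Fin d) (Fin d) ℂ) {e : ℝ}
    (he : 1 < e) : tailProb ρ P e = 0 := by
  refine sum_eq_zero fun s _ => if_neg ?_
  have hcard : (#{i | s i} : ℝ) ≤ n := by
    exact_mod_cast (card_filter_le _ _).trans_eq (card_fin n)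
  have hn' : (1 : ℝ) ≤ n := by exact_mod_cast hn
  nlinarith

section Refinement

variable {α : Type*} [Fintype α] {E : α → Matrix (Fin d) (Fin d) ℂ}

lemma povmProd_sum_filter (hE : ∑ a, E a = 1) (f : α → Bool) (s : Fin n → Bool) :
    povmProd (∑ a with f a, E a) s
      = ∑ t : Fin n → α with (fun i => f (t i)) = s, piKronecker fun i => E (t i) := by
  have hsite : ∀ b : Bool, (if b then ∑ a with f a, E a else 1 - ∑ a with f a, E a)
      = ∑ a with f a = b, E a := by
    rintro (_ | _)
    · rw [← hE, ← sum_filter_add_sum_filter_not univ (fun a => f a = true)]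
      simp
    · simp
  have hfiber : Fintype.piFinset (fun i => ({a | f a = s i} : Finset α))
      = ({t | (fun i => f (t i)) = s} : Finset (Fin n → α)) := by
    ext t
    simp [funext_iff]
  rw [povmProd_eq_piKronecker]
  simp_rw [hsite]
  rw [piKronecker_sum, hfiber]

lemma tailProb_sum_filter (hE : ∑ a, E a = 1) (f : α → Bool) (e : ℝ) :
    tailProb ρ (∑ a with f a, E a) e = ∑ t : Fin n → α,
      if e * n ≤ #{i | f (t i)} then ((piKronecker fun i => E (t i)) * ρ).trace.re else 0 := by
  rw [tailProb, ← sum_fiberwise univ (fun (t : Fin n → α) i => f (t i))]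
  refine sum_congr rfl fun s _ => ?_
  rw [povmProd_sum_filter hE, Matrix.sum_mul, trace_sum, Complex.re_sum]
  split_ifs with h
  · refine sum_congr rfl fun t ht => ?_
    obtain rfl := (mem_filter.mp ht).2
    exact (if_pos h).symm
  · refine (sum_eq_zero fun t ht => ?_).symm
    obtain rfl := (mem_filter.mp ht).2
    exact if_neg h

lemma tailProb_sum_filter_mono (hρ : ρ.PosSemidef) (hE0 : ∀ a, 0 ≤ E a) (hE : ∑ a, E a = 1)
    {f g : α → Bool} (hfg : ∀ a, f a → g a) (e : ℝ) :
    tailProb ρ (∑ a with f a, E a) e ≤ tailProb ρ (∑ a with g a, E a) e := by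
  rw [tailProb_sum_filter ρ hE, tailProb_sum_filter ρ hE]
  refine sum_le_sum fun t _ => ?_
  have hcount : (#{i | f (t i)} : ℝ) ≤ #{i | g (t i)} := by
    exact_mod_cast card_le_card (monotone_filter_right _ fun i _ => hfg (t i))
  have hp := re_trace_piKronecker_mul_nonneg ρ hρ hE0 t
  split_ifs <;> linarith

lemma tailProb_sum_filter_or_le (hρ : ρ.PosSemidef) (hE0 : ∀ a, 0 ≤ E a)
    (hE : ∑ a, E a = 1) (f g : α → Bool) (e₁ e₂ : ℝ) :
    tailProb ρ (∑ a with f a || g a, E a) (e₁ + e₂)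
      ≤ tailProb ρ (∑ a with f a, E a) e₁ + tailProb ρ (∑ a with g a, E a) e₂ := by
  rw [tailProb_sum_filter ρ hE, tailProb_sum_filter ρ hE, tailProb_sum_filter ρ hE,
    ← sum_add_distrib]
  refine sum_le_sum fun t _ => ?_
  have hcount : (#{i | f (t i) || g (t i)} : ℝ) ≤ #{i | f (t i)} + #{i | g (t i)} := by
    norm_cast
    refine (card_le_card fun i => ?_).trans (card_union_le _ _)
    simp
  have hp := re_trace_piKronecker_mul_nonneg ρ hρ hE0 t
  rw [add_mul]
  split_ifs <;> linarith

end Refinement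

theorem tailProb_mono (hρ : ρ.PosSemidef) {A B : Matrix (Fin d) (Fin d) ℂ} (hA : 0 ≤ A)
    (hAB : A ≤ B) (hB : B ≤ 1) (e : ℝ) : tailProb ρ A e ≤ tailProb ρ B e := by
  let E : Fin 3 → Matrix (Fin d) (Fin d) ℂ := ![A, B - A, 1 - B]
  have hE : ∑ a, E a = 1 := by simp [E, Fin.sum_univ_three]
  have hE0 : ∀ a, 0 ≤ E a := by
    simp [E, Fin.forall_fin_succ, hA, sub_nonneg.mpr hAB, sub_nonneg.mpr hB]
  have hEA : ∑ a with ![true, false, false] a, E a = A := by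
    simp [E, sum_filter, Fin.sum_univ_three]
  have hEB : ∑ a with ![true, true, false] a, E a = B := by
    simp [E, sum_filter, Fin.sum_univ_three]
  rw [← hEA, ← hEB]
  exact tailProb_sum_filter_mono ρ hρ hE0 hE (by decide) e

theorem tailProb_add_le (hρ : ρ.PosSemidef) {A B : Matrix (Fin d) (Fin d) ℂ} (hA : 0 ≤ A)
    (hB : 0 ≤ B) (hAB : A + B ≤ 1) (a b : ℝ) :
    tailProb ρ (A + B) (a + b) ≤ tailProb ρ A a + tailProb ρ B b := by
  let E : Fin 3 → Matrix (Fin d) (Fin d) ℂ := ![A, B, 1 - (A + B)]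
  have hE : ∑ a, E a = 1 := by simp [E, Fin.sum_univ_three]
  have hE0 : ∀ a, 0 ≤ E a := by
    simp [E, Fin.forall_fin_succ, hA, hB, sub_nonneg.mpr hAB]
  have hEA : ∑ a with ![true, false, false] a, E a = A := by
    simp [E, sum_filter, Fin.sum_univ_three]
  have hEB : ∑ a with ![false, true, false] a, E a = B := by
    simp [E, sum_filter, Fin.sum_univ_three]
  have hEAB : ∑ a with ![true, false, false] a || ![false, true, false] a, E a = A + B := by
    simp [E, sum_filter, Fin.sum_univ_three]
  rw [← hEAB, ← hEA, ← hEB]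
  exact tailProb_sum_filter_or_le ρ hρ hE0 hE _ _ a b

lemma povmProd_smul_one (η : ℝ) (s : Fin n → Bool) :
    povmProd (η • (1 : Matrix (Fin d) (Fin d) ℂ)) s
      = ((η ^ #{i | s i} * (1 - η) ^ (n - #{i | s i}) : ℝ) : ℂ) • 1 := by
  have hsite : ∀ i, (if s i then η • 1 else 1 - η • 1 : Matrix (Fin d) (Fin d) ℂ)
      = ((if s i then η else 1 - η : ℝ) : ℂ) • 1 := by
    intro i
    split <;> simp [sub_smul, Complex.coe_smul]
  have hcard : #{i | ¬s i} = n - #{i | s i} := by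
    have := card_filter_add_card_filter_not (s := univ) (fun i => s i = true)
    rw [card_univ, Fintype.card_fin] at this
    omega
  rw [povmProd_eq_piKronecker]
  simp_rw [hsite]
  rw [piKronecker_smul, piKronecker_one, ← Complex.ofReal_prod, prod_ite, prod_const,
    prod_const, hcard]

lemma tailProb_smul_one (hρtr : ρ.trace = 1) (η e : ℝ) :
    tailProb ρ (η • (1 : Matrix (Fin d) (Fin d) ℂ)) e = ∑ k ∈ range (n + 1),
      if e * n ≤ k then (n.choose k : ℝ) * η ^ k * (1 - η) ^ (n - k) else 0 := by
  simp_rw [tailProb, povmProd_smul_one, smul_mul, one_mul, trace_smul, hρtr, smul_eq_mul,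
    mul_one, Complex.ofReal_re]
  rw [Fintype.sum_fun_bool_apply_card
    (fun k => if e * n ≤ k then η ^ k * (1 - η) ^ (n - k) else 0)]
  simp [mul_assoc]

theorem tailProb_le_binTail (hρ : ρ.PosSemidef) (hρtr : ρ.trace = 1)
    {R : Matrix (Fin d) (Fin d) ℂ} {η : ℝ} (hR : 0 ≤ R) (hRη : R ≤ η • 1) (hη : η ≤ 1)
    (c : ℝ) : tailProb ρ R (η + c) ≤ binTail n η c := by
  have hη1 : η • (1 : Matrix (Fin d) (Fin d) ℂ) ≤ 1 := by
    simpa using smul_le_smul_of_nonneg_right hη (zero_le_one' (Matrix (Fin d) (Fin d) ℂ))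
  calc tailProb ρ R (η + c) ≤ tailProb ρ (η • 1) (η + c) := tailProb_mono ρ hρ hR hRη hη1 _
    _ = binTail n η c := by
      rw [tailProb_smul_one ρ hρtr, binTail, sum_filter]
      simp_rw [mul_comm (η + c)]

open scoped Matrix.Norms.L2Operator in
theorem tailProb_le_of_norm_sub_le (hρ : ρ.PosSemidef) (hρtr : ρ.trace = 1)
    {P P' : Matrix (Fin d) (Fin d) ℂ} (hP : 0 ≤ P) (hP1 : P ≤ 1) (hP' : 0 ≤ P') (hP'1 : P' ≤ 1)
    {δ : ℝ} (hδ : ‖P' - P‖ ≤ δ) (hδ1 : 2 * δ ≤ 1) (e c : ℝ) :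
    tailProb ρ P' (e + 2 * δ + c) ≤ tailProb ρ P e + binTail n (2 * δ) c := by
  have hδ0 : 0 ≤ δ := (norm_nonneg _).trans hδ
  obtain ⟨hXlower, hXupper⟩ :=
    ((nonneg_iff_posSemidef.mp hP').isHermitian.sub
      (nonneg_iff_posSemidef.mp hP).isHermitian).mem_Icc_of_norm_le hδ
  set G := (1 - δ) • P
  set R := δ • 1 + (1 - δ) • (P' - P)
  have hG0 : 0 ≤ G := smul_nonneg (by linarith) hP
  have hGP : G ≤ P := smul_le_of_le_one_left hP (by linarith)
  have hR0 : 0 ≤ R := by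
    rw [show R = (1 - δ) • (P' - P - -(δ • 1)) + δ ^ 2 • 1 by module]
    exact add_nonneg (smul_nonneg (by linarith) (sub_nonneg.mpr hXlower))
      (smul_nonneg (sq_nonneg δ) zero_le_one)
  have hR2δ : R ≤ (2 * δ) • 1 := by
    rw [← sub_nonneg, show (2 * δ) • 1 - R = (1 - δ) • (δ • 1 - (P' - P)) + δ ^ 2 • 1 by module]
    exact add_nonneg (smul_nonneg (by linarith) (sub_nonneg.mpr hXupper))
      (smul_nonneg (sq_nonneg δ) zero_le_one)
  have hP'GR : P' ≤ G + R := by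
    rw [← sub_nonneg, show G + R - P' = δ • (1 - P') by module]
    exact smul_nonneg hδ0 (sub_nonneg.mpr hP'1)
  have hGR1 : G + R ≤ 1 := by
    rw [← sub_nonneg, show 1 - (G + R) = (1 - δ) • (1 - P') by module]
    exact smul_nonneg (by linarith) (sub_nonneg.mpr hP'1)
  calc tailProb ρ P' (e + 2 * δ + c) ≤ tailProb ρ (G + R) (e + (2 * δ + c)) := by
        rw [add_assoc e]
        exact tailProb_mono ρ hρ hP' hP'GR hGR1 _
    _ ≤ tailProb ρ G e + tailProb ρ R (2 * δ + c) := tailProb_add_le ρ hρ hG0 hR0 hGR1 _ _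
    _ ≤ tailProb ρ P e + binTail n (2 * δ) c :=
        add_le_add (tailProb_mono ρ hρ hG0 hGP hP1 e)
          (tailProb_le_binTail ρ hρ hρtr hR0 hR2δ hδ1 c)

end TailProb

lemma tailProb_fin_zero {d : ℕ} (ρ : Matrix (Fin 0 → Fin d) (Fin 0 → Fin d) ℂ)
    (P : Matrix (Fin d) (Fin d) ℂ) (e : ℝ) : tailProb ρ P e = ρ.trace.re := by
  have hunit : ∀ s : Fin 0 → Bool, povmProd P s = 1 := fun s => by
    rw [povmProd_eq_piKronecker, Subsingleton.elim (fun i => if s i then P else 1 - P) fun _ => 1,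
      piKronecker_one]
  simp [tailProb, hunit]

theorem tailProb_close_povm_general {d n : ℕ}
    (ρ : Matrix (Fin n → Fin d) (Fin n → Fin d) ℂ)
    (hρ : ρ.PosSemidef) (hρtr : ρ.trace = 1)
    (P P' : Matrix (Fin d) (Fin d) ℂ)
    (hP : P.PosSemidef) (hPle : ((1 : Matrix (Fin d) (Fin d) ℂ) - P).PosSemidef)
    (hP' : P'.PosSemidef) (hP'le : ((1 : Matrix (Fin d) (Fin d) ℂ) - P').PosSemidef)
    (δ : ℝ) (hδ : matOpNorm (P' - P) ≤ δ)
    (e c : ℝ) (he0 : 0 ≤ e) (hc : 0 ≤ c) :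
    tailProb ρ P' (e + 2 * δ + c) ≤ tailProb ρ P e + binTail n (2 * δ) c := by
  rcases le_or_gt (2 * δ) 1 with hδ1 | hδ1
  · exact tailProb_le_of_norm_sub_le ρ hρ hρtr hP.nonneg hPle hP'.nonneg hP'le
      (matOpNorm_eq_norm (P' - P) ▸ hδ) hδ1 e c
  rcases Nat.eq_zero_or_pos n with rfl | hn
  · simp [tailProb_fin_zero, binTail]
  · rw [tailProb_eq_zero_of_one_lt ρ hn P' (by linarith),
      binTail_eq_zero_of_one_lt hn (by linarith), add_zero]
    exact tailProb_nonneg ρ hρ hP.nonneg hPle e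

/-- **Similar measurements lead to similar observed frequencies.** If `{P, I−P}` and
`{P′, I−P′}` are binary POVMs with `‖P′ − P‖_∞ ≤ δ`, then for all `e ∈ [0,1]` and `c ≥ 0`,
`Pr(N_{P′}/n ≥ e + 2δ + c) ≤ Pr(N_P/n ≥ e) + ξ(n, 2δ, c)`. -/
theorem tailProb_close_povm {d n : ℕ}
    (ρ : Matrix (Fin n → Fin d) (Fin n → Fin d) ℂ)
    (hρ : ρ.PosSemidef) (hρtr : ρ.trace = 1)
    (P P' : Matrix (Fin d) (Fin d) ℂ)
    (hP : P.PosSemidef) (hPle : ((1 : Matrix (Fin d) (Fin d) ℂ) - P).PosSemidef)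
    (hP' : P'.PosSemidef) (hP'le : ((1 : Matrix (Fin d) (Fin d) ℂ) - P').PosSemidef)
    (δ : ℝ) (hδ : matOpNorm (P' - P) ≤ δ)
    (e c : ℝ) (he0 : 0 ≤ e) (he1 : e ≤ 1) (hc : 0 ≤ c) :
    tailProb ρ P' (e + 2 * δ + c) ≤ tailProb ρ P e + binTail n (2 * δ) c :=
  tailProb_close_povm_general ρ hρ hρtr P P' hP hPle hP' hP'le δ hδ e c he0 hc
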